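/- arXiv:1103.3793 — 5 statements merged into one kernel-verified Lean document; each statement's English description precedes it below -/
import Mathlib

section
/- Let L be a Lindblad generator on M_d(ℂ) built from a Hermitian H and Kraus operators {h_α}, and let L^T be its dual generator, L^T[X] = i[H,X] + Σ_α (h_α† X h_α − (1/2){h_α† h_α, X}). If there exists an invertible (full-rank) density matrix ρ* with L[ρ*] = 0, then the fixed-point set M_γ = {X ∈ M_d(ℂ) : L^T[X] = 0} is a unital *-subalgebra of M_d(ℂ): it contains the identity matrix and is closed under sums, scalar multiples, adjoints, and matrix products. -/
open Matrix Filter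
open scoped ComplexOrder

variable {d : ℕ}

/-- The Lindblad generator built from `H` and Kraus operators `h`. -/
noncomputable def lindbladOf (H : Matrix (Fin d) (Fin d) ℂ) {n : ℕ}
    (h : Fin n → Matrix (Fin d) (Fin d) ℂ) :
    Matrix (Fin d) (Fin d) ℂ →ₗ[ℂ] Matrix (Fin d) (Fin d) ℂ :=
  (-Complex.I) • (LinearMap.mulLeft ℂ H - LinearMap.mulRight ℂ H) +
    ∑ α, ((LinearMap.mulLeft ℂ (h α)).comp (LinearMap.mulRight ℂ (h α)ᴴ)
      - ((1 : ℂ)/2) • (LinearMap.mulLeft ℂ ((h α)ᴴ * h α) + LinearMap.mulRight ℂ ((h α)ᴴ * h α)))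

/-- The dual (Heisenberg picture) Lindblad generator built from `H` and Kraus operators `h`. -/
noncomputable def lindbladDualOf (H : Matrix (Fin d) (Fin d) ℂ) {n : ℕ}
    (h : Fin n → Matrix (Fin d) (Fin d) ℂ) :
    Matrix (Fin d) (Fin d) ℂ →ₗ[ℂ] Matrix (Fin d) (Fin d) ℂ :=
  Complex.I • (LinearMap.mulLeft ℂ H - LinearMap.mulRight ℂ H) +
    ∑ α, ((LinearMap.mulLeft ℂ (h α)ᴴ).comp (LinearMap.mulRight ℂ (h α))
      - ((1 : ℂ)/2) • (LinearMap.mulLeft ℂ ((h α)ᴴ * h α) + LinearMap.mulRight ℂ ((h α)ᴴ * h α)))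

/-!
The dual generator is a derivation up to a dissipative defect:
`L^T(X Y) = X L^T(Y) + L^T(X) Y + ∑ α, ⁅X, h αᴴ⁆ ⁅h α, Y⁆`.
If `L^T X = 0`, then also `L^T Xᴴ = 0` (as `H` is Hermitian), so
`L^T(Xᴴ X) = ∑ α, ⁅h α, X⁆ᴴ ⁅h α, X⁆`.
Its expectation in the stationary state is `tr (ρ L^T(Xᴴ X)) = tr (L[ρ] Xᴴ X) = 0`, a sum of
nonnegative terms `tr (⁅h α, X⁆ ρ ⁅h α, X⁆ᴴ)`; since `ρ` is invertible, every `h α` commutes with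
`X`. Hence the defect vanishes whenever `Y` is a fixed point, and fixed points are closed under
products.
-/

open scoped MatrixOrder in
theorem Matrix.PosDef.eq_zero_of_trace_mul_mul_conjTranspose_eq_zero {𝕜 m : Type*} [RCLike 𝕜]
    [Fintype m] [DecidableEq m] {ρ C : Matrix m m 𝕜} (hρ : ρ.PosDef) (h : (C * ρ * Cᴴ).trace = 0) :
    C = 0 := by
  obtain ⟨y, hy, rfl⟩ :=
    CStarAlgebra.isStrictlyPositive_iff_eq_star_mul_self.mp hρ.isStrictlyPositive
  have hCy : C * yᴴ = 0 := by
    rw [← trace_mul_conjTranspose_self_eq_zero_iff, ← h, conjTranspose_mul,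
      conjTranspose_conjTranspose, star_eq_conjTranspose, mul_assoc, mul_assoc, mul_assoc]
  simpa using hy.star.mul_left_eq_zero.mp hCy

theorem Matrix.PosDef.eq_zero_of_sum_trace_mul_mul_conjTranspose_eq_zero {𝕜 m ι : Type*}
    [RCLike 𝕜] [Fintype m] [DecidableEq m] [Fintype ι] {ρ : Matrix m m 𝕜} (hρ : ρ.PosDef)
    {C : ι → Matrix m m 𝕜} (h : ∑ i, (C i * ρ * (C i)ᴴ).trace = 0) (i : ι) : C i = 0 := by
  refine hρ.eq_zero_of_trace_mul_mul_conjTranspose_eq_zero ?_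
  refine (Finset.sum_eq_zero_iff_of_nonneg fun j _ => ?_).mp h i (Finset.mem_univ i)
  exact (hρ.posSemidef.mul_mul_conjTranspose_same _).trace_nonneg

theorem Matrix.conjTranspose_lie {R m : Type*} [CommRing R] [StarRing R] [Fintype m]
    (A B : Matrix m m R) :
    ⁅A, B⁆ᴴ = ⁅Bᴴ, Aᴴ⁆ := by
  simp only [Ring.lie_def, conjTranspose_sub, conjTranspose_mul]

section Lindblad

variable (H : Matrix (Fin d) (Fin d) ℂ) {n : ℕ} (h : Fin n → Matrix (Fin d) (Fin d) ℂ)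

theorem lindbladOf_apply (ρ : Matrix (Fin d) (Fin d) ℂ) :
    lindbladOf H h ρ = (-Complex.I) • (H * ρ - ρ * H) +
      ∑ α, (h α * ρ * (h α)ᴴ - (1 / 2 : ℂ) • ((h α)ᴴ * h α * ρ + ρ * ((h α)ᴴ * h α))) := by
  simp [lindbladOf, LinearMap.sum_apply, mul_assoc]

theorem lindbladDualOf_apply (X : Matrix (Fin d) (Fin d) ℂ) :
    lindbladDualOf H h X = Complex.I • (H * X - X * H) +
      ∑ α, ((h α)ᴴ * X * h α - (1 / 2 : ℂ) • ((h α)ᴴ * h α * X + X * ((h α)ᴴ * h α))) := by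
  simp [lindbladDualOf, LinearMap.sum_apply, mul_assoc]

theorem trace_lindbladOf_mul (ρ Z : Matrix (Fin d) (Fin d) ℂ) :
    (lindbladOf H h ρ * Z).trace = (ρ * lindbladDualOf H h Z).trace := by
  simp only [lindbladOf_apply, lindbladDualOf_apply, add_mul, mul_add, sub_mul, mul_sub,
    smul_mul_assoc, mul_smul_comm, smul_add, smul_sub, Finset.sum_mul, Finset.mul_sum,
    trace_add, trace_sub, trace_smul, trace_sum, mul_assoc, trace_mul_comm H (ρ * Z),
    trace_mul_comm ((h _)ᴴ) (h _ * (ρ * Z)), trace_mul_comm (h _) (ρ * _)]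
  refine congrArg₂ (· + ·) ?_ (Finset.sum_congr rfl fun α _ => by abel)
  simp only [smul_eq_mul]
  ring

theorem lindbladDualOf_one : lindbladDualOf H h 1 = 0 := by
  rw [lindbladDualOf_apply]
  simp only [mul_one, one_mul, sub_self, smul_zero, zero_add]
  exact Finset.sum_eq_zero fun α _ => by module

variable {H} in
theorem lindbladDualOf_conjTranspose (hH : H.IsHermitian) (X : Matrix (Fin d) (Fin d) ℂ) :
    lindbladDualOf H h Xᴴ = (lindbladDualOf H h X)ᴴ := by
  simp only [lindbladDualOf_apply, conjTranspose_add, conjTranspose_sum, conjTranspose_smul,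
    conjTranspose_sub, conjTranspose_mul, conjTranspose_conjTranspose, hH.eq,
    Complex.star_def, Complex.conj_I, map_div₀, map_one, Complex.conj_ofNat, mul_assoc]
  congr 1
  · module
  · exact Finset.sum_congr rfl fun α _ => by module

theorem lindbladDualOf_mul (X Y : Matrix (Fin d) (Fin d) ℂ) :
    lindbladDualOf H h (X * Y) = X * lindbladDualOf H h Y + lindbladDualOf H h X * Y +
      ∑ α, ⁅X, (h α)ᴴ⁆ * ⁅h α, Y⁆ := by
  have hamiltonian : Complex.I • (H * (X * Y) - X * Y * H) =
      X * (Complex.I • (H * Y - Y * H)) + Complex.I • (H * X - X * H) * Y := by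
    simp only [mul_sub, sub_mul, mul_smul_comm, smul_mul_assoc, mul_assoc]
    module
  have dissipator (g : Matrix (Fin d) (Fin d) ℂ) :
      gᴴ * (X * Y) * g - (1 / 2 : ℂ) • (gᴴ * g * (X * Y) + X * Y * (gᴴ * g)) =
        X * (gᴴ * Y * g - (1 / 2 : ℂ) • (gᴴ * g * Y + Y * (gᴴ * g))) +
        (gᴴ * X * g - (1 / 2 : ℂ) • (gᴴ * g * X + X * (gᴴ * g))) * Y + ⁅X, gᴴ⁆ * ⁅g, Y⁆ := by
    simp only [Ring.lie_def, mul_add, add_mul, mul_sub, sub_mul, mul_smul_comm, smul_mul_assoc,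
      mul_assoc]
    module
  simp only [lindbladDualOf_apply, mul_add, add_mul, Finset.mul_sum, Finset.sum_mul,
    hamiltonian, dissipator, Finset.sum_add_distrib]
  abel

variable {H h} in
theorem commute_of_lindbladDualOf_eq_zero (hH : H.IsHermitian) {ρ : Matrix (Fin d) (Fin d) ℂ}
    (hρ : ρ.PosDef) (hstat : lindbladOf H h ρ = 0) {X : Matrix (Fin d) (Fin d) ℂ}
    (hX : lindbladDualOf H h X = 0) (α : Fin n) : Commute (h α) X := by
  have hXstar : lindbladDualOf H h Xᴴ = 0 := by
    rw [lindbladDualOf_conjTranspose h hH, hX, conjTranspose_zero]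
  have hsq : lindbladDualOf H h (Xᴴ * X) = ∑ β, ⁅h β, X⁆ᴴ * ⁅h β, X⁆ := by
    simp only [lindbladDualOf_mul, hX, hXstar, mul_zero, zero_mul, zero_add, conjTranspose_lie]
  have hsum : ∑ β, (⁅h β, X⁆ * ρ * ⁅h β, X⁆ᴴ).trace = 0 :=
    calc ∑ β, (⁅h β, X⁆ * ρ * ⁅h β, X⁆ᴴ).trace
        = (ρ * lindbladDualOf H h (Xᴴ * X)).trace := by
          simp only [hsq, Finset.mul_sum, trace_sum, trace_mul_cycle _ ρ, trace_mul_comm ρ]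
      _ = (lindbladOf H h ρ * (Xᴴ * X)).trace := (trace_lindbladOf_mul H h ρ _).symm
      _ = 0 := by rw [hstat, zero_mul, trace_zero]
  exact commute_iff_lie_eq.mpr (hρ.eq_zero_of_sum_trace_mul_mul_conjTranspose_eq_zero hsum α)

end Lindblad

theorem stmt2_general (d : ℕ)
    (H : Matrix (Fin d) (Fin d) ℂ) (hH : H.IsHermitian)
    {n : ℕ} (h : Fin n → Matrix (Fin d) (Fin d) ℂ)
    (hρ : ∃ ρstar : Matrix (Fin d) (Fin d) ℂ,
      ρstar.PosDef ∧ ρstar.trace = 1 ∧ lindbladOf H h ρstar = 0) :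
    lindbladDualOf H h 1 = 0 ∧
    (∀ X Y : Matrix (Fin d) (Fin d) ℂ, lindbladDualOf H h X = 0 → lindbladDualOf H h Y = 0 →
      lindbladDualOf H h (X + Y) = 0) ∧
    (∀ (c : ℂ) (X : Matrix (Fin d) (Fin d) ℂ), lindbladDualOf H h X = 0 →
      lindbladDualOf H h (c • X) = 0) ∧
    (∀ X : Matrix (Fin d) (Fin d) ℂ, lindbladDualOf H h X = 0 →
      lindbladDualOf H h Xᴴ = 0) ∧
    (∀ X Y : Matrix (Fin d) (Fin d) ℂ, lindbladDualOf H h X = 0 → lindbladDualOf H h Y = 0 →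
      lindbladDualOf H h (X * Y) = 0) := by
  obtain ⟨ρ, hρ, -, hstat⟩ := hρ
  refine ⟨lindbladDualOf_one H h, fun X Y hX hY => by rw [map_add, hX, hY, add_zero],
    fun c X hX => by rw [map_smul, hX, smul_zero],
    fun X hX => by rw [lindbladDualOf_conjTranspose h hH, hX, conjTranspose_zero],
    fun X Y hX hY => ?_⟩
  rw [lindbladDualOf_mul, hX, hY, mul_zero, zero_mul, add_zero, zero_add]
  exact Finset.sum_eq_zero fun α _ => by
    rw [commute_iff_lie_eq.mp (commute_of_lindbladDualOf_eq_zero hH hρ hstat hY α), mul_zero]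

theorem stmt2 (d : ℕ) (hd : 1 ≤ d)
    (H : Matrix (Fin d) (Fin d) ℂ) (hH : H.IsHermitian)
    {n : ℕ} (h : Fin n → Matrix (Fin d) (Fin d) ℂ)
    (hρ : ∃ ρstar : Matrix (Fin d) (Fin d) ℂ,
      ρstar.PosDef ∧ ρstar.trace = 1 ∧ lindbladOf H h ρstar = 0) :
    lindbladDualOf H h 1 = 0 ∧
    (∀ X Y : Matrix (Fin d) (Fin d) ℂ, lindbladDualOf H h X = 0 → lindbladDualOf H h Y = 0 →
      lindbladDualOf H h (X + Y) = 0) ∧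
    (∀ (c : ℂ) (X : Matrix (Fin d) (Fin d) ℂ), lindbladDualOf H h X = 0 →
      lindbladDualOf H h (c • X) = 0) ∧
    (∀ X : Matrix (Fin d) (Fin d) ℂ, lindbladDualOf H h X = 0 →
      lindbladDualOf H h Xᴴ = 0) ∧
    (∀ X Y : Matrix (Fin d) (Fin d) ℂ, lindbladDualOf H h X = 0 → lindbladDualOf H h Y = 0 →
      lindbladDualOf H h (X * Y) = 0) :=
  stmt2_general d H hH h hρ
end

section
/- Let Φ : M_d(ℂ) → M_d(ℂ) be a linear map that is trace-preserving (Tr(Φ[X]) = Tr(X) for all X) and positive (Φ[A] is positive semidefinite whenever A is positive semidefinite). If X ∈ M_d(ℂ) is Hermitian and Φ[X] = X, then Φ[X₊] = X₊ and Φ[X₋] = X₋, where X = X₊ − X₋ is the spectral decomposition of X into its positive part X₊ and negative part X₋ (both positive semidefinite with X₊X₋ = 0). -/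
open Matrix
open scoped ComplexOrder

/-! Let `P` be the support projection of `X₋`, so that `X₊ P = 0` and `X₋ P = X₋`. For
`A = Φ X₊` and `B = Φ X₋` the fixed-point equation reads `A - B = X₊ - X₋`, hence `B P = A P + X₋`,
and trace preservation gives `Tr (B (1 - P)) + Tr (A P) = Tr B - Tr X₋ = 0`. Both traces are
traces of products of positive semidefinite matrices, hence nonnegative, so both vanish; this
forces `A P = 0` and `B (1 - P) = 0`, whence `B = B P = X₋` and `A = X₊`. -/

/-- `p = a * a⁺` with `a⁺ = cfc (·⁻¹) a`, which inverts `a` on its support because `0⁻¹ = 0`;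
finiteness of the spectrum makes the discontinuous `x ↦ x⁻¹` admissible in the functional
calculus. -/
theorem IsSelfAdjoint.exists_isStarProjection_mul_eq_self {A : Type*} [Ring A] [StarRing A]
    [Algebra ℝ A] [TopologicalSpace A] [ContinuousFunctionalCalculus ℝ A IsSelfAdjoint]
    {a : A} (ha : IsSelfAdjoint a) (hfin : (spectrum ℝ a).Finite) :
    ∃ p : A, IsStarProjection p ∧ a * p = a ∧ ∀ b : A, b * a = 0 → b * p = 0 := by
  have hcont (f : ℝ → ℝ) : ContinuousOn f (spectrum ℝ a) := hfin.continuousOn f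
  have hmul (f g : ℝ → ℝ) : cfc (fun x => f x * g x) a = cfc f a * cfc g a :=
    cfc_mul f g a (hcont f) (hcont g)
  have hp : a * cfc (fun x : ℝ => x⁻¹) a = cfc (fun x : ℝ => x * x⁻¹) a := by
    rw [hmul, cfc_id' ℝ a]
  refine ⟨a * cfc (fun x : ℝ => x⁻¹) a, ⟨?_, ?_⟩, ?_,
    fun b hb => by rw [← mul_assoc, hb, zero_mul]⟩
  · rw [IsIdempotentElem, hp, ← hmul]
    refine cfc_congr fun x _ => ?_
    by_cases hx : x = 0 <;> simp [hx]
  · rw [hp]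
    exact cfc_predicate _ a
  · calc a * (a * cfc (fun x : ℝ => x⁻¹) a) = cfc (fun x : ℝ => x * (x * x⁻¹)) a := by
          rw [hmul (fun x => x), cfc_id' ℝ a, ← hp]
      _ = cfc (fun x : ℝ => x) a := cfc_congr fun x _ => by by_cases hx : x = 0 <;> simp [hx]
      _ = a := cfc_id' ℝ a

namespace Matrix
variable {n 𝕜 : Type*} [Fintype n] [RCLike 𝕜]

theorem PosSemidef.exists_eq_conjTranspose_mul_self {A : Matrix n n 𝕜} (hA : A.PosSemidef) :
    ∃ C : Matrix n n 𝕜, A = Cᴴ * C := by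
  classical
  open scoped MatrixOrder in
  exact ⟨CFC.sqrt A, by
    rw [(CFC.sqrt_nonneg A).posSemidef.isHermitian.eq, CFC.sqrt_mul_sqrt_self A hA.nonneg]⟩

theorem PosSemidef.trace_mul_nonneg {A B : Matrix n n 𝕜} (hA : A.PosSemidef) (hB : B.PosSemidef) :
    0 ≤ (A * B).trace := by
  obtain ⟨C, rfl⟩ := hB.exists_eq_conjTranspose_mul_self
  rw [← mul_assoc, trace_mul_comm]
  simpa [mul_assoc] using (hA.mul_mul_conjTranspose_same C).trace_nonneg

theorem PosSemidef.mul_eq_zero_of_trace_mul_eq_zero {A B : Matrix n n 𝕜} (hA : A.PosSemidef)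
    (hB : B.PosSemidef) (h : (A * B).trace = 0) : A * B = 0 := by
  obtain ⟨D, rfl⟩ := hA.exists_eq_conjTranspose_mul_self
  obtain ⟨C, rfl⟩ := hB.exists_eq_conjTranspose_mul_self
  have hCDDC : (D * Cᴴ)ᴴ * (D * Cᴴ) = 0 := by
    have hconj : (D * Cᴴ)ᴴ * (D * Cᴴ) = C * (Dᴴ * D) * Cᴴ := by
      simp only [conjTranspose_mul, conjTranspose_conjTranspose, mul_assoc]
    rw [hconj, ← (hA.mul_mul_conjTranspose_same C).trace_eq_zero_iff, trace_mul_cycle,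
      trace_mul_comm, h]
  rw [mul_assoc, ← mul_assoc D, conjTranspose_mul_self_eq_zero.mp hCDDC, zero_mul, mul_zero]

theorem eq_and_eq_of_sub_eq_sub_of_trace_le {A B Xp Xm : Matrix n n 𝕜} (hA : A.PosSemidef)
    (hB : B.PosSemidef) (hXm : Xm.IsHermitian) (horth : Xp * Xm = 0) (hsub : A - B = Xp - Xm)
    (htr : B.trace ≤ Xm.trace) : A = Xp ∧ B = Xm := by
  classical
  obtain ⟨P, hP, hXmP, hP_of_mul⟩ := hXm.isSelfAdjoint.exists_isStarProjection_mul_eq_self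
    Xm.finite_real_spectrum
  have hPpsd : P.PosSemidef := by
    open scoped MatrixOrder in exact nonneg_iff_posSemidef.mp hP.nonneg
  have hQpsd : (1 - P).PosSemidef := by
    open scoped MatrixOrder in exact nonneg_iff_posSemidef.mp hP.one_sub_nonneg
  have hBP : B * P = A * P + Xm := by
    rw [show B = A - Xp + Xm by rw [sub_add, ← hsub, sub_sub_cancel], add_mul, sub_mul,
      hP_of_mul Xp horth, hXmP, sub_zero]
  have htr_sum : (B * (1 - P)).trace + (A * P).trace ≤ 0 := by
    calc (B * (1 - P)).trace + (A * P).trace = B.trace - Xm.trace := by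
          rw [mul_sub, mul_one, trace_sub, hBP, trace_add]; ring
      _ ≤ 0 := sub_nonpos.mpr htr
  have hBQ_nonneg := hB.trace_mul_nonneg hQpsd
  have hAP_nonneg := hA.trace_mul_nonneg hPpsd
  have hBQ : B * (1 - P) = 0 := hB.mul_eq_zero_of_trace_mul_eq_zero hQpsd <|
    le_antisymm ((le_add_of_nonneg_right hAP_nonneg).trans htr_sum) hBQ_nonneg
  have hAP : A * P = 0 := hA.mul_eq_zero_of_trace_mul_eq_zero hPpsd <|
    le_antisymm ((le_add_of_nonneg_left hBQ_nonneg).trans htr_sum) hAP_nonneg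
  have hB_eq : B = Xm := by
    rw [mul_sub, mul_one, sub_eq_zero] at hBQ
    rw [hBQ, hBP, hAP, zero_add]
  exact ⟨by rwa [hB_eq, sub_left_inj] at hsub, hB_eq⟩

end Matrix

theorem stmt6_general (d : ℕ)
    (Φ : Matrix (Fin d) (Fin d) ℂ →ₗ[ℂ] Matrix (Fin d) (Fin d) ℂ)
    (htrace : ∀ X : Matrix (Fin d) (Fin d) ℂ, (Φ X).trace = X.trace)
    (hpos : ∀ A : Matrix (Fin d) (Fin d) ℂ, A.PosSemidef → (Φ A).PosSemidef)
    (X : Matrix (Fin d) (Fin d) ℂ) (hfix : Φ X = X)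
    (Xp Xm : Matrix (Fin d) (Fin d) ℂ) (hXp : Xp.PosSemidef) (hXm : Xm.PosSemidef)
    (hdecomp : X = Xp - Xm) (horth : Xp * Xm = 0) :
    Φ Xp = Xp ∧ Φ Xm = Xm := by
  have hsub : Φ Xp - Φ Xm = Xp - Xm := by rw [← map_sub, ← hdecomp, hfix]
  exact eq_and_eq_of_sub_eq_sub_of_trace_le (hpos Xp hXp) (hpos Xm hXm) hXm.isHermitian horth hsub
    (htrace Xm).le

theorem stmt6 (d : ℕ) (hd : 1 ≤ d)
    (Φ : Matrix (Fin d) (Fin d) ℂ →ₗ[ℂ] Matrix (Fin d) (Fin d) ℂ)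
    (htrace : ∀ X : Matrix (Fin d) (Fin d) ℂ, (Φ X).trace = X.trace)
    (hpos : ∀ A : Matrix (Fin d) (Fin d) ℂ, A.PosSemidef → (Φ A).PosSemidef)
    (X : Matrix (Fin d) (Fin d) ℂ) (hX : X.IsHermitian) (hfix : Φ X = X)
    (Xp Xm : Matrix (Fin d) (Fin d) ℂ) (hXp : Xp.PosSemidef) (hXm : Xm.PosSemidef)
    (hdecomp : X = Xp - Xm) (horth : Xp * Xm = 0) :
    Φ Xp = Xp ∧ Φ Xm = Xm :=
  stmt6_general d Φ htrace hpos X hfix Xp Xm hXp hXm hdecomp horth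
end

section
/- Let L₀ and L₁ be Lindblad generators on M_d(ℂ) and set L_ε = L₀ + εL₁. Fix n ≥ 1 and suppose there is a sequence ε_m > 0 with ε_m → 0 such that for every m the generator L_{ε_m} admits n stationary density matrices ρ₁(ε_m), …, ρ_n(ε_m) that are pairwise orthogonal in the Hilbert–Schmidt sense (Tr(ρ_j(ε_m)ρ_k(ε_m)) = 0 for j ≠ k). Then L₀ admits n pairwise orthogonal stationary density matrices; in particular, the maximal number of mutually orthogonal stationary density matrices of L_ε for small ε cannot exceed that of L₀. -/
open Matrix Filter
open scoped ComplexOrder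

variable {d : ℕ}

/-- `L` is a Lindblad generator. -/
def IsLindblad (L : Matrix (Fin d) (Fin d) ℂ →ₗ[ℂ] Matrix (Fin d) (Fin d) ℂ) : Prop :=
  ∃ (H : Matrix (Fin d) (Fin d) ℂ) (n : ℕ) (h : Fin n → Matrix (Fin d) (Fin d) ℂ),
    H.IsHermitian ∧ L = lindbladOf H h

/-- `ρ` is a stationary density matrix of `L`. -/
def IsStationaryState (L : Matrix (Fin d) (Fin d) ℂ →ₗ[ℂ] Matrix (Fin d) (Fin d) ℂ)
    (ρ : Matrix (Fin d) (Fin d) ℂ) : Prop :=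
  ρ.PosSemidef ∧ ρ.trace = 1 ∧ L ρ = 0

/-!
Density matrices form a compact set, since the entries of a positive semidefinite matrix are
bounded by its trace. Being stationary for `L₀ + ε • L₁` and being Hilbert–Schmidt orthogonal are
closed conditions, which pass to the limit `ε → 0` by continuity. Hence a convergent subsequence
of the `n`-tuples `ρ m` has as its limit `n` pairwise orthogonal stationary states of `L₀`.
-/

open Topology

namespace Matrix

variable {n 𝕜 : Type*} [RCLike 𝕜]

namespace PosSemidef

variable {A : Matrix n n 𝕜}

theorem norm_apply_sq_le (hA : A.PosSemidef) (i j : n) :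
    ‖A i j‖ ^ 2 ≤ RCLike.re (A i i) * RCLike.re (A j j) := by
  -- the `2 × 2` principal minor on `i, j` is nonnegative
  have hdet := (hA.submatrix ![i, j]).det_nonneg
  rw [det_fin_two] at hdet
  simp only [submatrix_apply, Matrix.cons_val_zero, Matrix.cons_val_one] at hdet
  rw [← hA.1.coe_re_apply_self i, ← hA.1.coe_re_apply_self j, ← hA.1.apply j i,
    RCLike.star_def, RCLike.mul_conj, ← RCLike.ofReal_mul, ← RCLike.ofReal_pow,
    ← RCLike.ofReal_sub, RCLike.ofReal_nonneg, sub_nonneg] at hdet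
  exact hdet

variable [Fintype n]

theorem re_apply_self_le_re_trace (hA : A.PosSemidef) (i : n) :
    RCLike.re (A i i) ≤ RCLike.re A.trace := by
  rw [trace, map_sum]
  exact Finset.single_le_sum (f := fun k => RCLike.re (A k k))
    (fun _ _ => (RCLike.nonneg_iff.mp hA.diag_nonneg).1) (Finset.mem_univ i)

theorem norm_apply_le_re_trace (hA : A.PosSemidef) (i j : n) :
    ‖A i j‖ ≤ RCLike.re A.trace := by
  have re_trace_nonneg : 0 ≤ RCLike.re A.trace := (RCLike.nonneg_iff.mp hA.trace_nonneg).1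
  refine le_of_pow_le_pow_left₀ two_ne_zero re_trace_nonneg ?_
  calc ‖A i j‖ ^ 2 ≤ RCLike.re (A i i) * RCLike.re (A j j) := hA.norm_apply_sq_le i j
    _ ≤ RCLike.re A.trace * RCLike.re A.trace :=
      mul_le_mul (hA.re_apply_self_le_re_trace i) (hA.re_apply_self_le_re_trace j)
        (RCLike.nonneg_iff.mp hA.diag_nonneg).1 re_trace_nonneg
    _ = RCLike.re A.trace ^ 2 := (sq _).symm

end PosSemidef

variable [Fintype n]

theorem isClosed_setOf_posSemidef : IsClosed {A : Matrix n n 𝕜 | A.PosSemidef} := by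
  simp only [posSemidef_iff_dotProduct_mulVec, Set.ofPred_and, Set.ofPred_forall]
  exact (isClosed_eq continuous_id.matrix_conjTranspose continuous_id).inter <|
    isClosed_iInter fun x => isClosed_le continuous_const <|
      continuous_const.dotProduct (continuous_id.matrix_mulVec continuous_const)

theorem isClosed_setOf_posSemidef_trace_eq_one :
    IsClosed {A : Matrix n n 𝕜 | A.PosSemidef ∧ A.trace = 1} :=
  isClosed_setOf_posSemidef.inter (isClosed_eq continuous_id.matrix_trace continuous_const)

theorem isCompact_setOf_posSemidef_trace_eq_one :
    IsCompact {A : Matrix n n 𝕜 | A.PosSemidef ∧ A.trace = 1} := by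
  refine (isCompact_univ_pi fun _ => isCompact_univ_pi fun _ =>
    isCompact_closedBall (0 : 𝕜) 1).of_isClosed_subset isClosed_setOf_posSemidef_trace_eq_one ?_
  rintro A ⟨hA, htr⟩
  simpa [htr] using fun i j => hA.norm_apply_le_re_trace i j

end Matrix

theorem LinearMap.apply_eq_zero_of_tendsto_of_add_smul_apply_eq_zero {R M N ι : Type*}
    [CommSemiring R] [TopologicalSpace R] [AddCommMonoid M] [Module R M] [TopologicalSpace M]
    [AddCommMonoid N] [Module R N] [TopologicalSpace N] [ContinuousAdd N] [ContinuousSMul R N]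
    [T2Space N] {L₀ L₁ : M →ₗ[R] N} (h₀ : Continuous L₀) (h₁ : Continuous L₁)
    {l : Filter ι} [l.NeBot] {ε : ι → R} {x : ι → M} {y : M}
    (hε : Tendsto ε l (𝓝 0)) (hx : Tendsto x l (𝓝 y)) (h : ∀ i, (L₀ + ε i • L₁) (x i) = 0) :
    L₀ y = 0 := by
  have hlim : Tendsto (fun i => (L₀ + ε i • L₁) (x i)) l (𝓝 (L₀ y + (0 : R) • L₁ y)) :=
    ((h₀.tendsto y).comp hx).add (hε.smul ((h₁.tendsto y).comp hx))
  rw [zero_smul, add_zero, funext h] at hlim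
  exact tendsto_nhds_unique hlim tendsto_const_nhds

theorem IsStationaryState.of_tendsto {d : ℕ} {ι : Type*} {l : Filter ι} [l.NeBot]
    {L₀ L₁ : Matrix (Fin d) (Fin d) ℂ →ₗ[ℂ] Matrix (Fin d) (Fin d) ℂ} {ε : ι → ℂ}
    {ρ : ι → Matrix (Fin d) (Fin d) ℂ} {σ : Matrix (Fin d) (Fin d) ℂ}
    (hε : Tendsto ε l (𝓝 0)) (hρ : Tendsto ρ l (𝓝 σ))
    (h : ∀ i, IsStationaryState (L₀ + ε i • L₁) (ρ i)) : IsStationaryState L₀ σ := by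
  obtain ⟨hpos, htr⟩ := isClosed_setOf_posSemidef_trace_eq_one.mem_of_tendsto hρ
    (Eventually.of_forall fun i => ⟨(h i).1, (h i).2.1⟩)
  exact ⟨hpos, htr, L₀.apply_eq_zero_of_tendsto_of_add_smul_apply_eq_zero
    L₀.continuous_of_finiteDimensional L₁.continuous_of_finiteDimensional hε hρ fun i => (h i).2.2⟩

theorem stmt7_general (d : ℕ)
    (L₀ L₁ : Matrix (Fin d) (Fin d) ℂ →ₗ[ℂ] Matrix (Fin d) (Fin d) ℂ)
    (n : ℕ) (ε : ℕ → ℝ)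
    (hεlim : Filter.Tendsto ε Filter.atTop (nhds 0))
    (ρ : ℕ → Fin n → Matrix (Fin d) (Fin d) ℂ)
    (hstat : ∀ m j, IsStationaryState (L₀ + (ε m : ℂ) • L₁) (ρ m j))
    (horth : ∀ m, ∀ j k, j ≠ k → ((ρ m j) * (ρ m k)).trace = 0) :
    ∃ σ : Fin n → Matrix (Fin d) (Fin d) ℂ,
      (∀ j, IsStationaryState L₀ (σ j)) ∧
      (∀ j k, j ≠ k → ((σ j) * (σ k)).trace = 0) := by
  have : FirstCountableTopology (Matrix (Fin d) (Fin d) ℂ) :=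
    inferInstanceAs (FirstCountableTopology (Fin d → Fin d → ℂ))
  obtain ⟨σ, -, φ, hφ, hσ⟩ :=
    (isCompact_univ_pi fun _ => isCompact_setOf_posSemidef_trace_eq_one).tendsto_subseq
      (x := ρ) fun m => Set.mem_univ_pi.2 fun j => ⟨(hstat m j).1, (hstat m j).2.1⟩
  have hεφ : Tendsto (fun m => (ε (φ m) : ℂ)) atTop (𝓝 0) := by
    simpa using (hεlim.comp hφ.tendsto_atTop).ofReal
  refine ⟨σ, fun j => .of_tendsto hεφ (tendsto_pi_nhds.1 hσ j) fun m => hstat (φ m) j,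
    fun j k hjk => ?_⟩
  have hclosed : IsClosed {p : Fin n → Matrix (Fin d) (Fin d) ℂ | (p j * p k).trace = 0} :=
    isClosed_eq ((continuous_apply j).matrix_mul (continuous_apply k)).matrix_trace
      continuous_const
  exact hclosed.mem_of_tendsto hσ (Eventually.of_forall fun m => horth (φ m) j k hjk)

theorem stmt7 (d : ℕ) (hd : 1 ≤ d)
    (L₀ L₁ : Matrix (Fin d) (Fin d) ℂ →ₗ[ℂ] Matrix (Fin d) (Fin d) ℂ)
    (hL₀ : IsLindblad L₀) (hL₁ : IsLindblad L₁)
    (n : ℕ) (hn : 1 ≤ n) (ε : ℕ → ℝ) (hεpos : ∀ m, 0 < ε m)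
    (hεlim : Filter.Tendsto ε Filter.atTop (nhds 0))
    (ρ : ℕ → Fin n → Matrix (Fin d) (Fin d) ℂ)
    (hstat : ∀ m j, IsStationaryState (L₀ + (ε m : ℂ) • L₁) (ρ m j))
    (horth : ∀ m, ∀ j k, j ≠ k → ((ρ m j) * (ρ m k)).trace = 0) :
    ∃ σ : Fin n → Matrix (Fin d) (Fin d) ℂ,
      (∀ j, IsStationaryState L₀ (σ j)) ∧
      (∀ j k, j ≠ k → ((σ j) * (σ k)).trace = 0) :=
  stmt7_general d L₀ L₁ n ε hεlim ρ hstat horth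
end

section
/- Let H ∈ M_d(ℂ) be Hermitian with d distinct eigenvalues E₁, …, E_d and orthonormal eigenbasis |1⟩, …, |d⟩. Then for every X ∈ M_d(ℂ), the Cesàro averages (1/T)∫₀^T e^{−itH} X e^{itH} dt converge as T → ∞ to the pinching Σ_{j=1}^d ⟨j|X|j⟩ |j⟩⟨j| of X in the eigenbasis of H. -/
open Matrix Filter

attribute [local instance] Matrix.frobeniusNormedAddCommGroup Matrix.frobeniusNormedSpace
  Matrix.frobeniusNormedRing Matrix.frobeniusNormedAlgebra

/-! Writing `Pⱼ = |j⟩⟨j|`, the spectral decomposition gives `e^{sH} = ∑ⱼ e^{s Eⱼ} Pⱼ`, so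
`e^{-itH} X e^{itH} = ∑_{j,k} e^{i(E_k - E_j)t} ⟨j|X|k⟩ |j⟩⟨k|`. The time average of `e^{ict}` tends
to `1` if `c = 0` and to `0` otherwise (the integral is bounded by `2/|c|`), and since the
eigenvalues are distinct only the diagonal terms `j = k` survive. -/

open Topology

theorem tendsto_cesaro_cexp_mul {c : ℂ} (hc : c.re ≤ 0) :
    Tendsto (fun T : ℝ => T⁻¹ • ∫ t in (0:ℝ)..T, Complex.exp (c * t)) atTop
      (𝓝 (if c = 0 then 1 else 0)) := by
  rcases eq_or_ne c 0 with rfl | hc0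
  · rw [if_pos rfl]
    refine tendsto_const_nhds.congr' ?_
    filter_upwards [eventually_ne_atTop 0] with T hT
    simp [hT]
  · rw [if_neg hc0]
    have hbound : ∀ T : ℝ, 0 < T →
        ‖T⁻¹ • ∫ t in (0:ℝ)..T, Complex.exp (c * t)‖ ≤ T⁻¹ * (2 / ‖c‖) := by
      intro T hT
      have hexp_le : ∀ s : ℝ, 0 ≤ s → ‖Complex.exp (c * s)‖ ≤ 1 := fun s hs => by
        rw [Complex.norm_exp, Real.exp_le_one_iff, Complex.re_mul_ofReal]
        exact mul_nonpos_of_nonpos_of_nonneg hc hs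
      rw [integral_exp_mul_complex hc0, norm_smul, norm_div,
        Real.norm_of_nonneg (inv_nonneg.2 hT.le)]
      gcongr
      calc ‖Complex.exp (c * T) - Complex.exp (c * (0:ℝ))‖
          ≤ ‖Complex.exp (c * T)‖ + ‖Complex.exp (c * (0:ℝ))‖ := norm_sub_le _ _
        _ ≤ 1 + 1 := add_le_add (hexp_le T hT.le) (hexp_le 0 le_rfl)
        _ = 2 := one_add_one_eq_two
    refine squeeze_zero_norm' ?_ (by simpa using tendsto_inv_atTop_zero.mul_const (2 / ‖c‖))
    filter_upwards [eventually_gt_atTop 0] with T hT using hbound T hT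

theorem tendsto_cesaro_sum_cexp_smul {V ι : Type*} [NormedAddCommGroup V] [NormedSpace ℂ V]
    [CompleteSpace V] [Fintype ι] {c : ι → ℂ} (hc : ∀ i, (c i).re ≤ 0) (A : ι → V) :
    Tendsto (fun T : ℝ => T⁻¹ • ∫ t in (0:ℝ)..T, ∑ i, Complex.exp (c i * t) • A i) atTop
      (𝓝 (∑ i, if c i = 0 then A i else 0)) := by
  have hsplit : ∀ T : ℝ, T⁻¹ • ∫ t in (0:ℝ)..T, ∑ i, Complex.exp (c i * t) • A i
      = ∑ i, (T⁻¹ • ∫ t in (0:ℝ)..T, Complex.exp (c i * t)) • A i := fun T => by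
    rw [intervalIntegral.integral_finsetSum fun i _ =>
      (by fun_prop : Continuous fun t : ℝ => Complex.exp (c i * t) • A i).intervalIntegrable _ _,
      Finset.smul_sum]
    simp only [intervalIntegral.integral_smul_const, smul_assoc]
  simp only [hsplit]
  refine tendsto_finsetSum _ fun i _ => ?_
  convert (tendsto_cesaro_cexp_mul (hc i)).smul_const (A i) using 2
  split_ifs <;> simp

namespace Matrix

theorem vecMulVec_mul_mul_vecMulVec {l m n o R : Type*} [Fintype m] [Fintype n] [CommSemiring R]
    (a : l → R) (b : m → R) (M : Matrix m n R) (c : n → R) (e : o → R) :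
    vecMulVec a b * M * vecMulVec c e = (b ⬝ᵥ M *ᵥ c) • vecMulVec a e := by
  rw [vecMulVec_mul, vecMulVec_mul_vecMulVec, ← dotProduct_mulVec, vecMulVec_smul]

theorem transpose_of_mul_diagonal_mul_conjTranspose {m n R : Type*} [Fintype n] [DecidableEq n]
    [CommSemiring R] [StarRing R] (v : n → m → R) (a : n → R) :
    (of v)ᵀ * diagonal a * (of v)ᵀᴴ = ∑ j, a j • vecMulVec (v j) (star (v j)) := by
  ext i k
  simp [mul_apply, sum_apply, vecMulVec_apply, diagonal_apply, mul_assoc, mul_left_comm]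

theorem conjTranspose_transpose_of_mul_transpose_of {n R : Type*} [Fintype n] [DecidableEq n]
    [Semiring R] [StarRing R] {v : n → n → R}
    (hv : ∀ j k, star (v j) ⬝ᵥ v k = if j = k then 1 else 0) :
    (of v)ᵀᴴ * (of v)ᵀ = 1 := by
  ext j k
  simpa [mul_apply, dotProduct, one_apply] using hv j k

section Eigenbasis

variable {n : Type*} [Fintype n] [DecidableEq n] {v : n → n → ℂ}
  (hv : ∀ j k, star (v j) ⬝ᵥ v k = if j = k then 1 else 0)
  {H : Matrix n n ℂ} {E : n → ℂ} (heig : ∀ j, H *ᵥ v j = E j • v j)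
include hv heig

theorem exp_smul_eq_sum_of_eigenbasis (s : ℂ) :
    NormedSpace.exp (s • H) = ∑ j, Complex.exp (s * E j) • vecMulVec (v j) (star (v j)) := by
  set U := (of v)ᵀ
  have hUU : Uᴴ * U = 1 := conjTranspose_transpose_of_mul_transpose_of hv
  have hUU' : U * Uᴴ = 1 := mul_eq_one_comm.mp hUU
  have hHU : H * U = U * diagonal E := by
    ext i j
    rw [mul_diagonal]
    simpa [mul_apply, mulVec, dotProduct, mul_comm, U] using congrFun (heig j) i
  have hH : s • H = U * diagonal (s • E) * Uᴴ := by
    rw [diagonal_smul, mul_smul_comm, smul_mul_assoc, ← hHU, mul_assoc, hUU', mul_one]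
  have hconj : NormedSpace.exp (U * diagonal (s • E) * Uᴴ) =
      U * NormedSpace.exp (diagonal (s • E)) * Uᴴ :=
    exp_units_conj ⟨U, Uᴴ, hUU', hUU⟩ _
  rw [hH, hconj, exp_diagonal, Pi.exp_def]
  simp only [Pi.smul_apply, smul_eq_mul, ← Complex.exp_eq_exp_ℂ]
  exact transpose_of_mul_diagonal_mul_conjTranspose v _

theorem exp_neg_smul_mul_mul_exp_smul_of_eigenbasis (X : Matrix n n ℂ) (s : ℂ) :
    NormedSpace.exp (-s • H) * X * NormedSpace.exp (s • H) =
      ∑ jk : n × n, Complex.exp ((E jk.2 - E jk.1) * s) •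
        (star (v jk.1) ⬝ᵥ X *ᵥ v jk.2) • vecMulVec (v jk.1) (star (v jk.2)) := by
  simp only [exp_smul_eq_sum_of_eigenbasis hv heig, Finset.sum_mul, Finset.mul_sum,
    smul_mul_assoc, mul_smul_comm, smul_smul, vecMulVec_mul_mul_vecMulVec, Fintype.sum_prod_type,
    Finset.smul_sum]
  rw [Finset.sum_comm]
  refine Finset.sum_congr rfl fun j _ => Finset.sum_congr rfl fun k _ => ?_
  rw [← mul_assoc, ← Complex.exp_add]
  ring_nf

end Eigenbasis

end Matrix

theorem stmt11_general (d : ℕ)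
    (H : Matrix (Fin d) (Fin d) ℂ)
    (E : Fin d → ℝ) (hdistinct : Function.Injective E)
    (v : Fin d → (Fin d → ℂ))
    (hON : ∀ j k, star (v j) ⬝ᵥ v k = if j = k then (1:ℂ) else 0)
    (heig : ∀ j, H *ᵥ v j = (E j : ℂ) • v j)
    (X : Matrix (Fin d) (Fin d) ℂ) :
    Tendsto (fun T : ℝ => T⁻¹ •
        ∫ t in (0:ℝ)..T,
          NormedSpace.exp ((-(Complex.I * t)) • H) * X *
            NormedSpace.exp ((Complex.I * t) • H))
      atTop
      (nhds (∑ j, (star (v j) ⬝ᵥ X *ᵥ v j) • vecMulVec (v j) (star (v j)))) := by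
  have hlimit : ∑ jk : Fin d × Fin d,
      (if ((E jk.2 : ℂ) - E jk.1) * Complex.I = 0 then
        (star (v jk.1) ⬝ᵥ X *ᵥ v jk.2) • vecMulVec (v jk.1) (star (v jk.2)) else 0) =
      ∑ j, (star (v j) ⬝ᵥ X *ᵥ v j) • vecMulVec (v j) (star (v j)) := by
    simp [Fintype.sum_prod_type, sub_eq_zero, hdistinct.eq_iff]
  simp only [exp_neg_smul_mul_mul_exp_smul_of_eigenbasis hON (E := fun j => (E j : ℂ)) heig,
    ← mul_assoc, ← hlimit]
  exact tendsto_cesaro_sum_cexp_smul (fun jk => by simp) _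

theorem stmt11 (d : ℕ) (hd : 1 ≤ d)
    (H : Matrix (Fin d) (Fin d) ℂ) (hH : H.IsHermitian)
    (E : Fin d → ℝ) (hdistinct : Function.Injective E)
    (v : Fin d → (Fin d → ℂ))
    (hON : ∀ j k, star (v j) ⬝ᵥ v k = if j = k then (1:ℂ) else 0)
    (heig : ∀ j, H *ᵥ v j = (E j : ℂ) • v j)
    (X : Matrix (Fin d) (Fin d) ℂ) :
    Tendsto (fun T : ℝ => T⁻¹ •
        ∫ t in (0:ℝ)..T,
          NormedSpace.exp ((-(Complex.I * t)) • H) * X *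
            NormedSpace.exp ((Complex.I * t) • H))
      atTop
      (nhds (∑ j, (star (v j) ⬝ᵥ X *ᵥ v j) • vecMulVec (v j) (star (v j)))) :=
  stmt11_general d H E hdistinct v hON heig X
end

section
/- Let {h_α} be a finite family in M_d(ℂ) and let j, k ∈ ℂ^d be unit vectors. Define η_{jk} = Σ_α ( ⟨j|h_α|j⟩ · conj(⟨k|h_α|k⟩) − (1/2)(⟨j|h_α†h_α|j⟩ + ⟨k|h_α†h_α|k⟩) ) (this equals ⟨j| D[|j⟩⟨k|] |k⟩ for the dissipator D[ρ] = Σ_α (h_α ρ h_α† − (1/2){h_α†h_α, ρ})). Then Re(η_{jk}) ≤ −(1/2) Σ_α |⟨j|h_α|j⟩ − ⟨k|h_α|k⟩|² ≤ 0. -/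
/-
For a unit vector `v`, Cauchy–Schwarz gives `|⟨v|h|v⟩|² ≤ ‖h v‖² = ⟨v|h†h|v⟩`. Hence each term of
`Re η` is at most `Re (a b̄) - (|a|² + |b|²)/2 = -|a - b|²/2`, where `a = ⟨j|h|j⟩` and `b = ⟨k|h|k⟩`.
-/

open Matrix ComplexConjugate

lemma norm_star_dotProduct_sq_le {𝕜 ι : Type*} [RCLike 𝕜] [Fintype ι] (v w : ι → 𝕜) :
    ‖star v ⬝ᵥ w‖ ^ 2 ≤ RCLike.re (star v ⬝ᵥ v) * RCLike.re (star w ⬝ᵥ w) := by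
  have h_inner (x y : ι → 𝕜) : inner 𝕜 (WithLp.toLp 2 x) (WithLp.toLp 2 y) = star x ⬝ᵥ y :=
    dotProduct_comm _ _
  have h_norm (x : ι → 𝕜) : ‖WithLp.toLp 2 x‖ ^ 2 = RCLike.re (star x ⬝ᵥ x) := by
    rw [← h_inner, inner_self_eq_norm_sq]
  rw [← h_inner, ← h_norm, ← h_norm, ← mul_pow]
  gcongr
  exact norm_inner_le_norm _ _

lemma star_dotProduct_conjTranspose_mul_self_mulVec {R n : Type*} [CommSemiring R] [StarRing R]
    [Fintype n] (A : Matrix n n R) (v : n → R) :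
    star v ⬝ᵥ (Aᴴ * A) *ᵥ v = star (A *ᵥ v) ⬝ᵥ A *ᵥ v := by
  rw [← mulVec_mulVec, dotProduct_mulVec, star_mulVec]

lemma norm_star_dotProduct_mulVec_sq_le {𝕜 n : Type*} [RCLike 𝕜] [Fintype n] (A : Matrix n n 𝕜)
    {v : n → 𝕜} (hv : star v ⬝ᵥ v = 1) :
    ‖star v ⬝ᵥ A *ᵥ v‖ ^ 2 ≤ RCLike.re (star v ⬝ᵥ (Aᴴ * A) *ᵥ v) := by
  simpa [hv, star_dotProduct_conjTranspose_mul_self_mulVec] using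
    norm_star_dotProduct_sq_le v (A *ᵥ v)

lemma re_mul_conj_sub_half_add_le {a b x y : ℂ} (ha : ‖a‖ ^ 2 ≤ x.re) (hb : ‖b‖ ^ 2 ≤ y.re) :
    (a * conj b - (1 / 2 : ℂ) * (x + y)).re ≤ -(1 / 2) * ‖a - b‖ ^ 2 := by
  rw [one_div_mul_eq_div, Complex.sub_re, Complex.div_ofNat_re, Complex.add_re, Complex.sq_norm,
    Complex.normSq_sub]
  rw [Complex.sq_norm] at ha hb
  linarith

lemma re_dissipator_term_le {n : Type*} [Fintype n] (A : Matrix n n ℂ) {j k : n → ℂ}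
    (hj : star j ⬝ᵥ j = 1) (hk : star k ⬝ᵥ k = 1) :
    ((star j ⬝ᵥ A *ᵥ j) * conj (star k ⬝ᵥ A *ᵥ k) -
        (1 / 2 : ℂ) * ((star j ⬝ᵥ (Aᴴ * A) *ᵥ j) + (star k ⬝ᵥ (Aᴴ * A) *ᵥ k))).re ≤
      -(1 / 2) * ‖(star j ⬝ᵥ A *ᵥ j) - (star k ⬝ᵥ A *ᵥ k)‖ ^ 2 :=
  re_mul_conj_sub_half_add_le (norm_star_dotProduct_mulVec_sq_le A hj)
    (norm_star_dotProduct_mulVec_sq_le A hk)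

theorem stmt14_general (d : ℕ)
    {n : ℕ} (h : Fin n → Matrix (Fin d) (Fin d) ℂ)
    (j k : Fin d → ℂ) (hj : star j ⬝ᵥ j = 1) (hk : star k ⬝ᵥ k = 1)
    (η : ℂ)
    (hη : η = ∑ α,
      ((star j ⬝ᵥ (h α) *ᵥ j) * (starRingEnd ℂ) (star k ⬝ᵥ (h α) *ᵥ k) -
        (1/2 : ℂ) * ((star j ⬝ᵥ ((h α)ᴴ * h α) *ᵥ j) + (star k ⬝ᵥ ((h α)ᴴ * h α) *ᵥ k)))) :
    η.re ≤ -(1/2 : ℝ) * ∑ α, ‖(star j ⬝ᵥ (h α) *ᵥ j) - (star k ⬝ᵥ (h α) *ᵥ k)‖ ^ 2 ∧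
    -(1/2 : ℝ) * ∑ α, ‖(star j ⬝ᵥ (h α) *ᵥ j) - (star k ⬝ᵥ (h α) *ᵥ k)‖ ^ 2 ≤ 0 := by
  subst hη
  constructor
  · rw [Complex.re_sum, Finset.mul_sum]
    exact Finset.sum_le_sum fun α _ ↦ re_dissipator_term_le (h α) hj hk
  · have h_sum_nonneg : 0 ≤ ∑ α, ‖(star j ⬝ᵥ (h α) *ᵥ j) - (star k ⬝ᵥ (h α) *ᵥ k)‖ ^ 2 :=
      Finset.sum_nonneg fun α _ ↦ by positivity
    linarith

theorem stmt14 (d : ℕ) (hd : 1 ≤ d)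
    {n : ℕ} (h : Fin n → Matrix (Fin d) (Fin d) ℂ)
    (j k : Fin d → ℂ) (hj : star j ⬝ᵥ j = 1) (hk : star k ⬝ᵥ k = 1)
    (η : ℂ)
    (hη : η = ∑ α,
      ((star j ⬝ᵥ (h α) *ᵥ j) * (starRingEnd ℂ) (star k ⬝ᵥ (h α) *ᵥ k) -
        (1/2 : ℂ) * ((star j ⬝ᵥ ((h α)ᴴ * h α) *ᵥ j) + (star k ⬝ᵥ ((h α)ᴴ * h α) *ᵥ k)))) :
    η.re ≤ -(1/2 : ℝ) * ∑ α, ‖(star j ⬝ᵥ (h α) *ᵥ j) - (star k ⬝ᵥ (h α) *ᵥ k)‖ ^ 2 ∧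
    -(1/2 : ℝ) * ∑ α, ‖(star j ⬝ᵥ (h α) *ᵥ j) - (star k ⬝ᵥ (h α) *ᵥ k)‖ ^ 2 ≤ 0 :=
  stmt14_general d h j k hj hk η hη
end
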